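/- arXiv:1802.04646 — 3 statements merged into one kernel-verified Lean document; each statement's English description precedes it below -/
import Mathlib

section
/- Let p ∈ (1,∞) with conjugate p', and r ∈ D \ {0}. The p-inner function J = f − f̂ associated with f(z) = 1 − z/r is given by J(z) = (1 − z/r)/(1 − r^{⟨p'−1⟩} z), where r^{⟨p'−1⟩} := |r|^{p'−1} e^{−i arg r}. Equivalently, J(z) = 1 − ((1−|r|^{p'})/r) · z/(1 − r^{⟨p'−1⟩} z), and J is p-inner, J(0) = 1, J(r) = 0. -/
/-- The `ℓ^p` norm of a coefficient sequence. -/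
noncomputable def pnorm (p : ℝ) (a : ℕ → ℂ) : ℝ := (∑' k, ‖a k‖ ^ p) ^ (1/p)

/-- Membership in `ℓ^p_A`, via the coefficient sequence. -/
def Memlp (p : ℝ) (a : ℕ → ℂ) : Prop := Summable fun k => ‖a k‖ ^ p

/-- Coefficients of `S^n f`, where `S` is the shift `(Sf)(z) = z f(z)`. -/
def shiftn (n : ℕ) (a : ℕ → ℂ) : ℕ → ℂ := fun m => if m < n then 0 else a (m - n)

/-- Birkhoff-James orthogonality `a ⊥_p b` in `ℓ^p_A`. -/
def orth (p : ℝ) (a b : ℕ → ℂ) : Prop :=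
  ∀ β : ℂ, pnorm p a ≤ pnorm p fun k => a k + β * b k

/-- `g` belongs to `[Sf]`, the closed span of `{S^k f : k ≥ 1}` in `ℓ^p_A`. -/
def inSpanSf (p : ℝ) (f g : ℕ → ℂ) : Prop :=
  ∀ ε > 0, ∃ (N : ℕ) (c : ℕ → ℂ),
    pnorm p (fun m => g m - ∑ k ∈ Finset.range N, c k * shiftn (k + 1) f m) < ε

/-- `z^{⟨s⟩} := |z|^s e^{-i arg z}` for `z ≠ 0`, and `0^{⟨s⟩} := 0`. -/
noncomputable def zbr (s : ℝ) (z : ℂ) : ℂ := (‖z‖ ^ (s - 1) : ℝ) • (starRingEnd ℂ z)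

open scoped ENNReal NNReal


lemma zbr_mul (s : ℝ) (x y : ℂ) : zbr s (x * y) = zbr s x * zbr s y := by
  unfold zbr
  rw [map_mul, norm_mul, Real.mul_rpow (norm_nonneg x) (norm_nonneg y)]
  push_cast [Complex.real_smul]
  ring

lemma norm_zbr (s : ℝ) (z : ℂ) (hz : z ≠ 0) : ‖zbr s z‖ = ‖z‖ ^ s := by
  unfold zbr
  rw [norm_smul, Real.norm_eq_abs, abs_of_nonneg (Real.rpow_nonneg (norm_nonneg z) _),
    RCLike.norm_conj]
  rw [← Real.rpow_add_one (by simpa using hz)]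
  ring_nf

lemma zbr_zbr {s t : ℝ} (h : s * t = 1) (z : ℂ) : zbr t (zbr s z) = z := by
  rcases eq_or_ne z 0 with rfl | hz
  · simp [zbr]
  · unfold zbr
    have h1 : (starRingEnd ℂ) ((‖z‖ ^ (s-1) : ℝ) • (starRingEnd ℂ) z)
        = (‖z‖ ^ (s-1) : ℝ) • z := by
      simp [Complex.conj_conj]
    have h2 : ‖(‖z‖ ^ (s-1) : ℝ) • (starRingEnd ℂ) z‖ = ‖z‖ ^ s := by
      have := norm_zbr s z hz
      unfold zbr at this; exact this
    rw [h1, h2, smul_smul, ← Real.rpow_mul (norm_nonneg z),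
      ← Real.rpow_add (norm_pos_iff.mpr hz)]
    have : s * (t - 1) + (s - 1) = 0 := by nlinarith
    rw [this, Real.rpow_zero, one_smul]

lemma myDeriv {p : ℝ} (hp : 1 < p) (a β : ℂ) :
    HasDerivAt (fun t : ℝ => ‖a + t • β‖ ^ p)
      (p * ‖a‖ ^ (p - 2) * ((starRingEnd ℂ) a * β).re) 0 := by
  have h1 : HasDerivAt (fun t : ℝ => a + t • β) β 0 := by
    simpa using ((hasDerivAt_id (0:ℝ)).smul_const β).const_add a
  have h2 := (hasFDerivAt_norm_rpow (E := ℂ) (a + (0:ℝ) • β) hp)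
  have h3 := h2.comp_hasDerivAt 0 h1
  simp only [zero_smul, add_zero] at h3
  exact h3.congr_deriv (by simp [Complex.inner]; left; ring)

lemma min_two_point {p : ℝ} (hp : 1 < p) (a b u v : ℂ)
    (h : ∀ β : ℂ, ‖a‖ ^ p + ‖b‖ ^ p ≤ ‖a + β * u‖ ^ p + ‖b + β * v‖ ^ p) :
    (‖a‖ ^ (p - 2) : ℝ) • ((starRingEnd ℂ) a * u) + (‖b‖ ^ (p - 2) : ℝ) • ((starRingEnd ℂ) b * v) = 0 := by
  set c : ℂ := (‖a‖ ^ (p - 2) : ℝ) • ((starRingEnd ℂ) a * u) + (‖b‖ ^ (p - 2) : ℝ) • ((starRingEnd ℂ) b * v) with hc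
  have key : ∀ β : ℂ, (c * β).re = 0 := by
    intro β
    have hd1 := myDeriv hp a (β * u)
    have hd2 := myDeriv hp b (β * v)
    have hψ : HasDerivAt (fun t : ℝ => ‖a + t • (β * u)‖ ^ p + ‖b + t • (β * v)‖ ^ p)
        (p * ‖a‖ ^ (p - 2) * ((starRingEnd ℂ) a * (β * u)).re
          + p * ‖b‖ ^ (p - 2) * ((starRingEnd ℂ) b * (β * v)).re) 0 := hd1.add hd2
    have hmin : IsLocalMin (fun t : ℝ => ‖a + t • (β * u)‖ ^ p + ‖b + t • (β * v)‖ ^ p) 0 := by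
      apply Filter.Eventually.of_forall
      intro t
      have := h ((t : ℂ) * β)
      simp only [zero_smul, add_zero]
      calc ‖a‖ ^ p + ‖b‖ ^ p ≤ ‖a + (t : ℂ) * β * u‖ ^ p + ‖b + (t : ℂ) * β * v‖ ^ p := this
        _ = ‖a + t • (β * u)‖ ^ p + ‖b + t • (β * v)‖ ^ p := by
            simp only [Complex.real_smul, mul_assoc]
    have hder : p * ‖a‖ ^ (p - 2) * ((starRingEnd ℂ) a * (β * u)).re
          + p * ‖b‖ ^ (p - 2) * ((starRingEnd ℂ) b * (β * v)).re = 0 := by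
      have := hmin.deriv_eq_zero
      rwa [hψ.deriv] at this
    have hp0 : p ≠ 0 := by positivity
    have hXY : ‖a‖ ^ (p - 2) * ((starRingEnd ℂ) a * (β * u)).re
          + ‖b‖ ^ (p - 2) * ((starRingEnd ℂ) b * (β * v)).re = 0 := by
      have h' : p * (‖a‖ ^ (p - 2) * ((starRingEnd ℂ) a * (β * u)).re
          + ‖b‖ ^ (p - 2) * ((starRingEnd ℂ) b * (β * v)).re) = 0 := by
        linear_combination hder
      exact (mul_eq_zero.mp h').resolve_left hp0
    rw [hc]
    have expand : ((‖a‖ ^ (p - 2) : ℝ) • ((starRingEnd ℂ) a * u)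
        + (‖b‖ ^ (p - 2) : ℝ) • ((starRingEnd ℂ) b * v)) * β
        = (‖a‖ ^ (p - 2) : ℝ) • ((starRingEnd ℂ) a * (β * u))
          + (‖b‖ ^ (p - 2) : ℝ) • ((starRingEnd ℂ) b * (β * v)) := by
      simp only [Complex.real_smul]; ring
    rw [expand]
    simp only [Complex.add_re, Complex.real_smul, Complex.re_ofReal_mul]
    linarith [hXY]
  have := key (starRingEnd ℂ c)
  rw [Complex.mul_conj] at this
  have : Complex.normSq c = 0 := by
    have h2 : ((Complex.normSq c : ℂ)).re = Complex.normSq c := by simp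
    rw [h2] at this; exact this
  exact Complex.normSq_eq_zero.mp this



section basics
variable {p : ℝ} (hp : 1 < p)

lemma pnorm_nonneg (a : ℕ → ℂ) : 0 ≤ pnorm p a :=
  Real.rpow_nonneg (tsum_nonneg fun k => Real.rpow_nonneg (norm_nonneg _) _) _

lemma pnorm_rpow_p (hp : 1 < p) (a : ℕ → ℂ) : (pnorm p a) ^ p = ∑' k, ‖a k‖ ^ p := by
  rw [pnorm, ← Real.rpow_mul (tsum_nonneg fun k => Real.rpow_nonneg (norm_nonneg _) _),
    one_div, inv_mul_cancel₀ (by positivity : p ≠ 0), Real.rpow_one]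

lemma coeff_le_pnorm (hp : 1 < p) {a : ℕ → ℂ} (ha : Memlp p a) (j : ℕ) :
    ‖a j‖ ≤ pnorm p a := by
  have hp0 : (0:ℝ) < p := by positivity
  have h1 : ‖a j‖ ^ p ≤ (pnorm p a) ^ p := by
    rw [pnorm_rpow_p hp]
    exact Summable.le_tsum ha j (fun k _ => Real.rpow_nonneg (norm_nonneg _) _)
  calc ‖a j‖ = ((‖a j‖ ^ p) ^ (1/p)) := by
        rw [← Real.rpow_mul (norm_nonneg _), mul_one_div, div_self (ne_of_gt hp0), Real.rpow_one]
    _ ≤ ((pnorm p a) ^ p) ^ (1/p) := by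
        apply Real.rpow_le_rpow (Real.rpow_nonneg (norm_nonneg _) _) h1 (by positivity)
    _ = pnorm p a := by
        rw [← Real.rpow_mul (pnorm_nonneg a), mul_one_div, div_self (ne_of_gt hp0), Real.rpow_one]

lemma tsum_le_tsum_of_pnorm_le (hp : 1 < p) {a b : ℕ → ℂ} (ha : Memlp p a) (hb : Memlp p b)
    (h : pnorm p a ≤ pnorm p b) : ∑' k, ‖a k‖ ^ p ≤ ∑' k, ‖b k‖ ^ p := by
  rw [← pnorm_rpow_p hp, ← pnorm_rpow_p hp]
  exact Real.rpow_le_rpow (pnorm_nonneg a) h (by positivity)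

lemma summable_norm_coeff_mul_pow (hp : 1 < p) {a : ℕ → ℂ} (ha : Memlp p a) {z : ℂ} (hz : ‖z‖ < 1) :
    Summable fun k => ‖a k * z ^ k‖ := by
  have hgeo : Summable fun k : ℕ => pnorm p a * ‖z‖ ^ k :=
    (summable_geometric_of_lt_one (norm_nonneg z) hz).mul_left _
  refine Summable.of_nonneg_of_le (fun k => norm_nonneg _) (fun k => ?_) hgeo
  rw [norm_mul, norm_pow]
  exact mul_le_mul_of_nonneg_right (coeff_le_pnorm hp ha k) (by positivity)

lemma summable_coeff_mul_pow (hp : 1 < p) {a : ℕ → ℂ} (ha : Memlp p a) {z : ℂ} (hz : ‖z‖ < 1) :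
    Summable fun k => a k * z ^ k :=
  (summable_norm_coeff_mul_pow hp ha hz).of_norm

lemma eval_bound (hp : 1 < p) {a : ℕ → ℂ} (ha : Memlp p a) {z : ℂ} (hz : ‖z‖ < 1) :
    ‖∑' k, a k * z ^ k‖ ≤ pnorm p a * (1 - ‖z‖)⁻¹ := by
  have hnorm := summable_norm_coeff_mul_pow hp ha hz
  have hgeo : Summable fun k : ℕ => pnorm p a * ‖z‖ ^ k :=
    (summable_geometric_of_lt_one (norm_nonneg z) hz).mul_left _
  calc ‖∑' k, a k * z ^ k‖ ≤ ∑' k, ‖a k * z ^ k‖ := norm_tsum_le_tsum_norm hnorm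
    _ ≤ ∑' k, pnorm p a * ‖z‖ ^ k := by
        refine Summable.tsum_le_tsum (fun k => ?_) hnorm hgeo
        rw [norm_mul, norm_pow]
        exact mul_le_mul_of_nonneg_right (coeff_le_pnorm hp ha k) (by positivity)
    _ = pnorm p a * (1 - ‖z‖)⁻¹ := by
        rw [tsum_mul_left, tsum_geometric_of_lt_one (norm_nonneg z) hz]
end basics

section normstuff
variable {p : ℝ}

lemma pnorm_smul (hp : 1 < p) (β : ℂ) (a : ℕ → ℂ) :
    pnorm p (fun k => β * a k) = ‖β‖ * pnorm p a := by
  unfold pnorm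
  have h1 : ∀ k, ‖β * a k‖ ^ p = ‖β‖ ^ p * ‖a k‖ ^ p := by
    intro k; rw [norm_mul, Real.mul_rpow (norm_nonneg _) (norm_nonneg _)]
  simp only [h1]
  rw [tsum_mul_left, Real.mul_rpow (by positivity)
    (tsum_nonneg fun k => Real.rpow_nonneg (norm_nonneg _) _),
    ← Real.rpow_mul (norm_nonneg β), mul_one_div, div_self (by positivity : p ≠ 0),
    Real.rpow_one]

lemma pnorm_add_le (hp : 1 < p) {a b : ℕ → ℂ} (ha : Memlp p a) (hb : Memlp p b) :
    pnorm p (fun k => a k + b k) ≤ pnorm p a + pnorm p b := by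
  set q : ℝ≥0∞ := ENNReal.ofReal p with hq
  have hq1 : (1:ℝ≥0∞) ≤ q := by
    rw [hq, ← ENNReal.ofReal_one]
    exact ENNReal.ofReal_le_ofReal hp.le
  haveI : Fact ((1:ℝ≥0∞) ≤ q) := ⟨hq1⟩
  have hqt : q.toReal = p := ENNReal.toReal_ofReal (by positivity)
  have hqt0 : 0 < q.toReal := by rw [hqt]; positivity
  have hA : Memℓp (a : ∀ _ : ℕ, ℂ) q := memℓp_gen (by rw [hqt]; exact ha)
  have hB : Memℓp (b : ∀ _ : ℕ, ℂ) q := memℓp_gen (by rw [hqt]; exact hb)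
  set A : lp (fun _ : ℕ => ℂ) q := ⟨a, hA⟩
  set B : lp (fun _ : ℕ => ℂ) q := ⟨b, hB⟩
  have hnA : ‖A‖ = pnorm p a := by rw [lp.norm_eq_tsum_rpow hqt0, hqt]; rfl
  have hnB : ‖B‖ = pnorm p b := by rw [lp.norm_eq_tsum_rpow hqt0, hqt]; rfl
  have hnAB : ‖A + B‖ = pnorm p (fun k => a k + b k) := by
    rw [lp.norm_eq_tsum_rpow hqt0, hqt]; rfl
  rw [← hnA, ← hnB, ← hnAB]
  exact norm_add_le A B

lemma Memlp.const_mul (hp : 1 < p) {a : ℕ → ℂ} (ha : Memlp p a) (β : ℂ) :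
    Memlp p (fun k => β * a k) := by
  unfold Memlp
  have h1 : ∀ k, ‖β * a k‖ ^ p = ‖β‖ ^ p * ‖a k‖ ^ p := by
    intro k; rw [norm_mul, Real.mul_rpow (norm_nonneg _) (norm_nonneg _)]
  simp only [h1]
  exact ha.mul_left _

lemma Memlp.add (hp : 1 < p) {a b : ℕ → ℂ} (ha : Memlp p a) (hb : Memlp p b) :
    Memlp p (fun k => a k + b k) := by
  unfold Memlp
  have key : ∀ k, ‖a k + b k‖ ^ p ≤ (2:ℝ) ^ p * (‖a k‖ ^ p + ‖b k‖ ^ p) := by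
    intro k
    have h1 : ‖a k + b k‖ ≤ 2 * max ‖a k‖ ‖b k‖ := by
      calc ‖a k + b k‖ ≤ ‖a k‖ + ‖b k‖ := norm_add_le _ _
        _ ≤ 2 * max ‖a k‖ ‖b k‖ := by
            rw [two_mul]
            exact add_le_add (le_max_left _ _) (le_max_right _ _)
    calc ‖a k + b k‖ ^ p ≤ (2 * max ‖a k‖ ‖b k‖) ^ p :=
          Real.rpow_le_rpow (norm_nonneg _) h1 (by positivity)
      _ = 2 ^ p * (max ‖a k‖ ‖b k‖) ^ p := Real.mul_rpow (by norm_num) (le_max_of_le_left (norm_nonneg _))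
      _ ≤ (2:ℝ) ^ p * (‖a k‖ ^ p + ‖b k‖ ^ p) := by
          apply mul_le_mul_of_nonneg_left _ (by positivity)
          rcases max_cases ‖a k‖ ‖b k‖ with ⟨h, _⟩ | ⟨h, _⟩ <;> rw [h]
          · nlinarith [Real.rpow_nonneg (norm_nonneg (b k)) p]
          · nlinarith [Real.rpow_nonneg (norm_nonneg (a k)) p]
  refine Summable.of_nonneg_of_le (fun k => Real.rpow_nonneg (norm_nonneg _) _) key ?_
  exact ((Summable.add ha hb).mul_left _)

lemma Memlp.sub' (hp : 1 < p) {a b : ℕ → ℂ} (ha : Memlp p a) (hb : Memlp p b) :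
    Memlp p (fun k => a k - b k) := by
  have := Memlp.add hp ha ((Memlp.const_mul hp hb (-1)))
  simpa [sub_eq_add_neg] using this

lemma Memlp.of_finite_support (hp : 1 < p) {a : ℕ → ℂ} {N : ℕ} (h : ∀ m, N ≤ m → a m = 0) :
    Memlp p a := by
  apply summable_of_ne_finset_zero (s := Finset.range N)
  intro m hm
  rw [h m (by simpa using hm), norm_zero, Real.zero_rpow (by positivity : p ≠ 0)]
end normstuff

section shift

def shiftR (n : ℕ) (h : ℕ → ℝ) : ℕ → ℝ := fun m => if m < n then 0 else h (m - n)

lemma shiftR_one (h : ℕ → ℝ) (n : ℕ) : shiftR (n+1) h = shiftR 1 (shiftR n h) := by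
  funext m
  simp only [shiftR]
  rcases Nat.eq_zero_or_pos m with rfl | hm
  · simp
  · have h1 : ¬ (m < 1) := by omega
    rw [if_neg h1]
    by_cases h2 : m < n + 1
    · rw [if_pos h2, if_pos (by omega)]
    · rw [if_neg h2, if_neg (by omega)]
      congr 1
      omega

lemma shiftR_zero (h : ℕ → ℝ) : shiftR 0 h = h := by
  funext m; simp [shiftR]

lemma summable_shiftR (n : ℕ) (h : ℕ → ℝ) : Summable (shiftR n h) ↔ Summable h := by
  induction n with
  | zero => rw [shiftR_zero]
  | succ n ih =>
    rw [shiftR_one]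
    rw [← ih]
    constructor
    · intro hs
      have := (summable_nat_add_iff 1).mpr hs
      simp [shiftR] at this; exact this
    · intro hs
      have h0 : (fun m => shiftR 1 (shiftR n h) (m + 1)) = shiftR n h := by
        funext m; simp [shiftR]
      rw [← (summable_nat_add_iff 1)]
      rw [h0]
      exact hs

lemma tsum_shiftR (n : ℕ) (h : ℕ → ℝ) : ∑' m, shiftR n h m = ∑' m, h m := by
  induction n with
  | zero => rw [shiftR_zero]
  | succ n ih =>
    rw [shiftR_one]
    by_cases hs : Summable h
    · have hsn : Summable (shiftR n h) := (summable_shiftR n h).mpr hs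
      have hs1 : Summable (shiftR 1 (shiftR n h)) := by
        rw [← shiftR_one, summable_shiftR]; exact hs
      rw [Summable.tsum_eq_zero_add hs1]
      have h0 : shiftR 1 (shiftR n h) 0 = 0 := by simp [shiftR]
      have h1 : (fun m => shiftR 1 (shiftR n h) (m + 1)) = shiftR n h := by
        funext m; simp [shiftR]
      rw [h0, h1, zero_add, ih]
    · rw [tsum_eq_zero_of_not_summable hs, tsum_eq_zero_of_not_summable]
      rw [← shiftR_one, summable_shiftR]
      exact hs

variable {p : ℝ}

lemma norm_shiftn_eq (hp : 1 < p) (n : ℕ) (a : ℕ → ℂ) :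
    (fun m => ‖shiftn n a m‖ ^ p) = shiftR n (fun m => ‖a m‖ ^ p) := by
  funext m
  simp only [shiftn, shiftR]
  by_cases h : m < n
  · rw [if_pos h, if_pos h, norm_zero, Real.zero_rpow (by positivity : p ≠ 0)]
  · rw [if_neg h, if_neg h]

lemma Memlp.shiftn_iff (hp : 1 < p) (n : ℕ) (a : ℕ → ℂ) :
    Memlp p (shiftn n a) ↔ Memlp p a := by
  unfold Memlp
  rw [norm_shiftn_eq hp, summable_shiftR]

lemma pnorm_shiftn (hp : 1 < p) (n : ℕ) (a : ℕ → ℂ) :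
    pnorm p (shiftn n a) = pnorm p a := by
  unfold pnorm
  rw [show (fun m => ‖shiftn n a m‖ ^ p) = shiftR n (fun m => ‖a m‖ ^ p) from
    norm_shiftn_eq hp n a]
  rw [tsum_shiftR]

end shift


section span
variable {p : ℝ} {r : ℂ} {f : ℕ → ℂ}

lemma pnorm_zero_fun (hp : 1 < p) : pnorm p (fun _ => (0:ℂ)) = 0 := by
  unfold pnorm
  simp only [norm_zero, Real.zero_rpow (by positivity : p ≠ 0), tsum_zero]
  rw [Real.zero_rpow (by positivity : 1/p ≠ 0)]

lemma shiftn_shiftn (a b : ℕ) (x : ℕ → ℂ) : shiftn a (shiftn b x) = shiftn (a + b) x := by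
  funext m
  simp only [shiftn]
  by_cases h1 : m < a
  · rw [if_pos h1, if_pos (by omega)]
  · rw [if_neg h1]
    by_cases h2 : m - a < b
    · rw [if_pos h2, if_pos (by omega)]
    · rw [if_neg h2, if_neg (by omega)]
      congr 1
      omega

lemma shiftn_sub (n : ℕ) (x y : ℕ → ℂ) (m : ℕ) :
    shiftn n (fun j => x j - y j) m = shiftn n x m - shiftn n y m := by
  simp only [shiftn]
  split_ifs <;> simp

lemma pnorm_sub_le (hp : 1 < p) {a b : ℕ → ℂ} (ha : Memlp p a) (hb : Memlp p b) :
    pnorm p (fun k => a k - b k) ≤ pnorm p a + pnorm p b := by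
  have h1 : Memlp p (fun k => (-1 : ℂ) * b k) := Memlp.const_mul hp hb (-1)
  have h2 := pnorm_add_le hp ha h1
  have h3 : (fun k => a k + (-1 : ℂ) * b k) = (fun k => a k - b k) := by
    funext k; ring
  rw [h3] at h2
  have h4 : pnorm p (fun k => (-1 : ℂ) * b k) = pnorm p b := by
    rw [pnorm_smul hp]; simp
  rw [h4] at h2
  exact h2

lemma f_spec (hfdef : f = fun k => if k = 0 then 1 else if k = 1 then -r⁻¹ else 0) :
    f 0 = 1 ∧ f 1 = -r⁻¹ ∧ ∀ m, 2 ≤ m → f m = 0 := by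
  subst hfdef
  refine ⟨rfl, rfl, fun m hm => ?_⟩
  simp only
  rw [if_neg (by omega), if_neg (by omega)]

lemma combo_support (hfdef : f = fun k => if k = 0 then 1 else if k = 1 then -r⁻¹ else 0)
    (N : ℕ) (c : ℕ → ℂ) :
    ∀ m, N + 2 ≤ m → (∑ k ∈ Finset.range N, c k * shiftn (k + 1) f m) = 0 := by
  obtain ⟨hf0, hf1, hf2⟩ := f_spec hfdef
  intro m hm
  apply Finset.sum_eq_zero
  intro k hk
  rw [Finset.mem_range] at hk
  have : shiftn (k+1) f m = 0 := by
    simp only [shiftn]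
    rw [if_neg (by omega)]
    exact hf2 _ (by omega)
  rw [this, mul_zero]

lemma Memlp_combo (hp : 1 < p)
    (hfdef : f = fun k => if k = 0 then 1 else if k = 1 then -r⁻¹ else 0)
    (N : ℕ) (c : ℕ → ℂ) :
    Memlp p (fun m => ∑ k ∈ Finset.range N, c k * shiftn (k + 1) f m) :=
  Memlp.of_finite_support hp (N := N + 2) (combo_support hfdef N c)

lemma Memlp_f (hp : 1 < p)
    (hfdef : f = fun k => if k = 0 then 1 else if k = 1 then -r⁻¹ else 0) :
    Memlp p f := by
  obtain ⟨_, _, hf2⟩ := f_spec hfdef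
  exact Memlp.of_finite_support hp (N := 2) hf2
end span

section span2
variable {p : ℝ} {r : ℂ} {f : ℕ → ℂ}

lemma span_coeff0 (hp : 1 < p)
    (hfdef : f = fun k => if k = 0 then 1 else if k = 1 then -r⁻¹ else 0)
    {g : ℕ → ℂ} (hgm : Memlp p g) (hg : inSpanSf p f g) : g 0 = 0 := by
  have key : ∀ ε > 0, ‖g 0‖ < ε := by
    intro ε hε
    obtain ⟨N, c, hc⟩ := hg ε hε
    have hcombo0 : (∑ k ∈ Finset.range N, c k * shiftn (k + 1) f 0) = 0 := by
      apply Finset.sum_eq_zero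
      intro k hk
      have : shiftn (k+1) f 0 = 0 := by simp [shiftn]
      rw [this, mul_zero]
    have hmem : Memlp p (fun m => g m - ∑ k ∈ Finset.range N, c k * shiftn (k + 1) f m) :=
      Memlp.sub' hp hgm (Memlp_combo hp hfdef N c)
    have := coeff_le_pnorm hp hmem 0
    simp only [hcombo0, sub_zero] at this
    exact lt_of_le_of_lt this hc
  by_contra h
  have : 0 < ‖g 0‖ := norm_pos_iff.mpr h
  exact absurd (key _ this) (lt_irrefl _)

lemma tsum_shiftf_eval (hr0 : r ≠ 0)
    (hfdef : f = fun k => if k = 0 then 1 else if k = 1 then -r⁻¹ else 0) (k : ℕ) :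
    ∑' m, shiftn (k + 1) f m * r ^ m = 0 := by
  obtain ⟨hf0, hf1, hf2⟩ := f_spec hfdef
  have hsupp : ∀ m ∉ ({k + 1, k + 2} : Finset ℕ), shiftn (k + 1) f m * r ^ m = 0 := by
    intro m hm
    simp only [Finset.mem_insert, Finset.mem_singleton] at hm
    push_neg at hm
    have : shiftn (k+1) f m = 0 := by
      simp only [shiftn]
      by_cases h : m < k + 1
      · rw [if_pos h]
      · rw [if_neg h]
        exact hf2 _ (by omega)
    rw [this, zero_mul]
  rw [tsum_eq_sum hsupp, Finset.sum_pair (by omega : k + 1 ≠ k + 2)]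
  have e1 : shiftn (k+1) f (k+1) = 1 := by
    simp only [shiftn]; rw [if_neg (by omega)]; simpa using hf0
  have e2 : shiftn (k+1) f (k+2) = -r⁻¹ := by
    simp only [shiftn]; rw [if_neg (by omega)]
    have : k + 2 - (k + 1) = 1 := by omega
    rw [this]; exact hf1
  rw [e1, e2, one_mul]
  have : r ^ (k + 2) = r * r ^ (k + 1) := by ring
  rw [this]
  field_simp
  ring

lemma span_eval (hp : 1 < p) (hr0 : r ≠ 0) (hr1 : ‖r‖ < 1)
    (hfdef : f = fun k => if k = 0 then 1 else if k = 1 then -r⁻¹ else 0)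
    {g : ℕ → ℂ} (hgm : Memlp p g) (hg : inSpanSf p f g) : ∑' m, g m * r ^ m = 0 := by
  have key : ∀ ε > 0, ‖∑' m, g m * r ^ m‖ ≤ ε * (1 - ‖r‖)⁻¹ := by
    intro ε hε
    obtain ⟨N, c, hc⟩ := hg ε hε
    set C : ℕ → ℂ := fun m => ∑ k ∈ Finset.range N, c k * shiftn (k + 1) f m with hC
    have hCm : Memlp p C := Memlp_combo hp hfdef N c
    have hmem : Memlp p (fun m => g m - C m) := Memlp.sub' hp hgm hCm
    -- tsum of C * r^m = 0
    have hCsum : ∀ k, Summable fun m => (c k * shiftn (k + 1) f m) * r ^ m := by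
      intro k
      apply summable_of_ne_finset_zero (s := Finset.range (k + 3))
      intro m hm
      rw [Finset.mem_range, not_lt] at hm
      obtain ⟨hf0, hf1, hf2⟩ := f_spec hfdef
      have : shiftn (k+1) f m = 0 := by
        simp only [shiftn]
        rw [if_neg (by omega)]
        exact hf2 _ (by omega)
      rw [this, mul_zero, zero_mul]
    have hCeval : ∑' m, C m * r ^ m = 0 := by
      have h1 : ∀ m, C m * r ^ m = ∑ k ∈ Finset.range N, (c k * shiftn (k + 1) f m) * r ^ m := by
        intro m; rw [hC, Finset.sum_mul]
      simp only [h1]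
      rw [Summable.tsum_finsetSum (fun k _ => hCsum k)]
      apply Finset.sum_eq_zero
      intro k _
      have h2 : ∀ m, (c k * shiftn (k + 1) f m) * r ^ m = c k * (shiftn (k + 1) f m * r ^ m) := by
        intro m; ring
      simp only [h2]
      rw [tsum_mul_left, tsum_shiftf_eval hr0 hfdef k, mul_zero]
    -- difference evaluation
    have hgsum : Summable fun m => g m * r ^ m := summable_coeff_mul_pow hp hgm hr1
    have hCsum' : Summable fun m => C m * r ^ m := summable_coeff_mul_pow hp hCm hr1
    have hdiff : ∑' m, (g m - C m) * r ^ m = ∑' m, g m * r ^ m := by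
      have : ∀ m, (g m - C m) * r ^ m = g m * r ^ m - C m * r ^ m := fun m => by ring
      simp only [this]
      rw [Summable.tsum_sub hgsum hCsum', hCeval, sub_zero]
    have hb := eval_bound hp hmem hr1
    rw [hdiff] at hb
    calc ‖∑' m, g m * r ^ m‖ ≤ pnorm p (fun m => g m - C m) * (1 - ‖r‖)⁻¹ := hb
      _ ≤ ε * (1 - ‖r‖)⁻¹ := by
          apply mul_le_mul_of_nonneg_right hc.le
          rw [inv_nonneg]
          linarith
  by_contra h
  have hpos : 0 < ‖∑' m, g m * r ^ m‖ := by
    rcases (norm_nonneg (∑' m, g m * r ^ m)).lt_or_eq with h' | h'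
    · exact h'
    · exact absurd (norm_eq_zero.mp h'.symm) h
  have hinv : 0 < (1 - ‖r‖)⁻¹ := by rw [inv_pos]; linarith
  set ε := ‖∑' m, g m * r ^ m‖ * (1 - ‖r‖) / 2 with hε
  have hεpos : 0 < ε := by
    apply div_pos (mul_pos hpos (by linarith)) (by norm_num)
  have := key ε hεpos
  rw [hε] at this
  have h2 : ‖∑' m, g m * r ^ m‖ * (1 - ‖r‖) / 2 * (1 - ‖r‖)⁻¹
      = ‖∑' m, g m * r ^ m‖ / 2 := by
    have hne : (1:ℝ) - ‖r‖ ≠ 0 := by linarith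
    have gen : ∀ X c : ℝ, c ≠ 0 → X * c / 2 * c⁻¹ = X / 2 := by
      intro X c hc; field_simp
    exact gen _ _ hne
  rw [h2] at this
  linarith
end span2

section span3
variable {p : ℝ} {r : ℂ} {f : ℕ → ℂ}

lemma span_sub_smul (hp : 1 < p)
    (hfdef : f = fun k => if k = 0 then 1 else if k = 1 then -r⁻¹ else 0)
    {g h : ℕ → ℂ} (hgm : Memlp p g) (hhm : Memlp p h)
    (hg : inSpanSf p f g) (hh : inSpanSf p f h) (β : ℂ) :
    inSpanSf p f (fun m => g m - β * h m) := by
  intro ε hε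
  obtain ⟨N₁, c, hc⟩ := hg (ε/2) (by linarith)
  obtain ⟨N₂, d, hd⟩ := hh (ε/(2*(‖β‖+1))) (by positivity)
  refine ⟨max N₁ N₂, fun k => (if k < N₁ then c k else 0) - β * (if k < N₂ then d k else 0), ?_⟩
  set e : ℕ → ℂ := fun k => (if k < N₁ then c k else 0) - β * (if k < N₂ then d k else 0) with he
  have hsum1 : ∀ m, (∑ k ∈ Finset.range (max N₁ N₂), (if k < N₁ then c k else 0) * shiftn (k+1) f m)
      = ∑ k ∈ Finset.range N₁, c k * shiftn (k+1) f m := by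
    intro m
    rw [← Finset.sum_subset (Finset.range_subset_range.mpr (le_max_left N₁ N₂))]
    · apply Finset.sum_congr rfl
      intro k hk
      rw [Finset.mem_range] at hk
      rw [if_pos hk]
    · intro k _ hk
      rw [Finset.mem_range] at hk
      rw [if_neg hk, zero_mul]
  have hsum2 : ∀ m, (∑ k ∈ Finset.range (max N₁ N₂), (if k < N₂ then d k else 0) * shiftn (k+1) f m)
      = ∑ k ∈ Finset.range N₂, d k * shiftn (k+1) f m := by
    intro m
    rw [← Finset.sum_subset (Finset.range_subset_range.mpr (le_max_right N₁ N₂))]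
    · apply Finset.sum_congr rfl
      intro k hk
      rw [Finset.mem_range] at hk
      rw [if_pos hk]
    · intro k _ hk
      rw [Finset.mem_range] at hk
      rw [if_neg hk, zero_mul]
  have hkey : (fun m => (g m - β * h m) - ∑ k ∈ Finset.range (max N₁ N₂), e k * shiftn (k+1) f m)
      = fun m => (g m - ∑ k ∈ Finset.range N₁, c k * shiftn (k+1) f m)
        - β * (h m - ∑ k ∈ Finset.range N₂, d k * shiftn (k+1) f m) := by
    funext m
    have expand : ∑ k ∈ Finset.range (max N₁ N₂), e k * shiftn (k+1) f m
        = (∑ k ∈ Finset.range (max N₁ N₂), (if k < N₁ then c k else 0) * shiftn (k+1) f m)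
          - β * ∑ k ∈ Finset.range (max N₁ N₂), (if k < N₂ then d k else 0) * shiftn (k+1) f m := by
      rw [Finset.mul_sum, ← Finset.sum_sub_distrib]
      apply Finset.sum_congr rfl
      intro k _
      rw [he]
      ring
    rw [expand, hsum1, hsum2]
    ring
  rw [hkey]
  have m1 : Memlp p (fun m => g m - ∑ k ∈ Finset.range N₁, c k * shiftn (k+1) f m) :=
    Memlp.sub' hp hgm (Memlp_combo hp hfdef N₁ c)
  have m2 : Memlp p (fun m => β * (h m - ∑ k ∈ Finset.range N₂, d k * shiftn (k+1) f m)) :=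
    Memlp.const_mul hp (Memlp.sub' hp hhm (Memlp_combo hp hfdef N₂ d)) β
  calc pnorm p (fun m => (g m - ∑ k ∈ Finset.range N₁, c k * shiftn (k+1) f m)
        - β * (h m - ∑ k ∈ Finset.range N₂, d k * shiftn (k+1) f m))
      ≤ pnorm p (fun m => g m - ∑ k ∈ Finset.range N₁, c k * shiftn (k+1) f m)
        + pnorm p (fun m => β * (h m - ∑ k ∈ Finset.range N₂, d k * shiftn (k+1) f m)) :=
        pnorm_sub_le hp m1 m2
    _ < ε := by
        rw [pnorm_smul hp]
        have hb : ‖β‖ * pnorm p (fun m => h m - ∑ k ∈ Finset.range N₂, d k * shiftn (k+1) f m)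
            ≤ ‖β‖ * (ε/(2*(‖β‖+1))) := by
          apply mul_le_mul_of_nonneg_left hd.le (norm_nonneg β)
        have hb2 : ‖β‖ * (ε/(2*(‖β‖+1))) ≤ ε/2 := by
          rw [mul_div_assoc', div_le_div_iff₀ (by positivity) (by norm_num : (0:ℝ) < 2)]
          nlinarith [norm_nonneg β]
        linarith
end span3

section span4
variable {p : ℝ} {r : ℂ} {f : ℕ → ℂ}

lemma span_shift (hp : 1 < p) {g : ℕ → ℂ} (hg : inSpanSf p f g) (n : ℕ) :
    inSpanSf p f (shiftn n g) := by
  intro ε hε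
  obtain ⟨N, c, hc⟩ := hg ε hε
  refine ⟨n + N, fun j => if j < n then 0 else c (j - n), ?_⟩
  set c' : ℕ → ℂ := fun j => if j < n then 0 else c (j - n) with hc'
  have hkey : (fun m => shiftn n g m - ∑ k ∈ Finset.range (n + N), c' k * shiftn (k+1) f m)
      = shiftn n (fun m => g m - ∑ k ∈ Finset.range N, c k * shiftn (k+1) f m) := by
    funext m
    rw [shiftn_sub]
    congr 1
    -- ∑ k ∈ range (n+N), c' k * shiftn (k+1) f m = shiftn n (combo) m
    have h1 : ∑ k ∈ Finset.range (n + N), c' k * shiftn (k+1) f m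
        = ∑ k ∈ Finset.range N, c k * shiftn (n + (k+1)) f m := by
      rw [Finset.sum_range_add]
      have hz : ∑ k ∈ Finset.range n, c' k * shiftn (k+1) f m = 0 := by
        apply Finset.sum_eq_zero
        intro k hk
        rw [Finset.mem_range] at hk
        rw [hc']
        simp only [if_pos hk, zero_mul]
      rw [hz, zero_add]
      apply Finset.sum_congr rfl
      intro k _
      rw [hc']
      simp only [if_neg (by omega : ¬ n + k < n)]
      have e1 : n + k - n = k := by omega
      have e2 : n + k + 1 = n + (k + 1) := by omega
      rw [e1, e2]
    rw [h1]
    have h2 : ∀ k, shiftn (n + (k+1)) f = shiftn n (shiftn (k+1) f) := by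
      intro k; rw [shiftn_shiftn]
    simp only [h2]
    -- push shiftn through the finite sum
    by_cases hm : m < n
    · simp [shiftn, if_pos hm]
    · simp only [shiftn, if_neg hm]
  rw [hkey, pnorm_shiftn hp]
  exact hc

lemma span_shiftf (hp : 1 < p) {n : ℕ} (hn : 1 ≤ n) : inSpanSf p f (shiftn n f) := by
  intro ε hε
  refine ⟨n, fun k => if k = n - 1 then 1 else 0, ?_⟩
  have hsum : ∀ m, ∑ k ∈ Finset.range n, (if k = n - 1 then (1:ℂ) else 0) * shiftn (k+1) f m
      = shiftn n f m := by
    intro m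
    rw [Finset.sum_eq_single (n-1)]
    · rw [if_pos rfl, one_mul]
      congr 1
      omega
    · intro k _ hk
      rw [if_neg hk, zero_mul]
    · intro h
      exfalso
      apply h
      rw [Finset.mem_range]
      omega
  have : (fun m => shiftn n f m - ∑ k ∈ Finset.range n, (if k = n - 1 then (1:ℂ) else 0) * shiftn (k+1) f m)
      = fun _ => 0 := by
    funext m; rw [hsum]; ring
  rw [this, pnorm_zero_fun hp]
  exact hε
end span4


lemma orth_two_point {p : ℝ} (hp : 1 < p) {a b : ℕ → ℂ} (ham : Memlp p a)
    (n : ℕ) (hbsupp : ∀ k, k ≠ n → k ≠ n + 1 → b k = 0)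
    (horth : orth p a b) :
    ∀ β : ℂ, ‖a n‖ ^ p + ‖a (n+1)‖ ^ p
      ≤ ‖a n + β * b n‖ ^ p + ‖a (n+1) + β * b (n+1)‖ ^ p := by
  intro β
  have hbm : Memlp p b := by
    apply Memlp.of_finite_support hp (N := n + 2)
    intro m hm
    exact hbsupp m (by omega) (by omega)
  have habm : Memlp p (fun k => a k + β * b k) :=
    Memlp.add hp ham (Memlp.const_mul hp hbm β)
  have h1 : ∑' k, ‖a k‖ ^ p ≤ ∑' k, ‖a k + β * b k‖ ^ p :=
    tsum_le_tsum_of_pnorm_le hp ham habm (horth β)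
  set D : ℕ → ℝ := fun k => ‖a k + β * b k‖ ^ p - ‖a k‖ ^ p with hD
  have hDsupp : ∀ k ∉ ({n, n+1} : Finset ℕ), D k = 0 := by
    intro k hk
    simp only [Finset.mem_insert, Finset.mem_singleton] at hk
    push_neg at hk
    rw [hD]
    simp only [hbsupp k hk.1 hk.2, mul_zero, add_zero, sub_self]
  have hDsum : Summable D := habm.sub ham
  have hDt : ∑' k, D k = D n + D (n+1) := by
    rw [tsum_eq_sum hDsupp, Finset.sum_pair (by omega : n ≠ n + 1)]
  have hDnn : 0 ≤ ∑' k, D k := by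
    rw [hD]
    rw [Summable.tsum_sub habm ham]
    linarith
  rw [hDt] at hDnn
  rw [hD] at hDnn
  simp only at hDnn
  linarith


theorem p_inner_linear_factor (p p' : ℝ) (hp : 1 < p) (hpp' : 1/p + 1/p' = 1)
    (r : ℂ) (hr0 : r ≠ 0) (hr1 : ‖r‖ < 1)
    (f : ℕ → ℂ) (hfdef : f = fun k => if k = 0 then 1 else if k = 1 then -r⁻¹ else 0)
    (fhat : ℕ → ℂ) (hfhatmem : Memlp p fhat) (hfhatSpan : inSpanSf p f fhat)
    (hfhatMin : ∀ g : ℕ → ℂ, Memlp p g → inSpanSf p f g →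
      pnorm p (fun k => f k - fhat k) ≤ pnorm p (fun k => f k - g k)) :
    (∀ z : ℂ, ‖z‖ < 1 →
      ∑' k, (f k - fhat k) * z ^ k = (1 - z / r) / (1 - zbr (p' - 1) r * z)) ∧
    ((fun k => f k - fhat k) ≠ 0 ∧
      ∀ n : ℕ, 1 ≤ n →
        orth p (fun k => f k - fhat k) (shiftn n fun k => f k - fhat k)) ∧
    f 0 - fhat 0 = 1 ∧
    ∑' k, (f k - fhat k) * r ^ k = 0 := by

  -- arithmetic on p, p'
  have hp0 : (0:ℝ) < p := by linarith
  have hpne : p ≠ 0 := ne_of_gt hp0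
  have h1plt : 1/p < 1 := by rw [div_lt_one hp0]; exact hp
  have h1ppos : 0 < 1/p := by positivity
  have h1p'pos : 0 < 1/p' := by linarith
  have hp'pos : 0 < p' := one_div_pos.mp h1p'pos
  have hp'ne : p' ≠ 0 := ne_of_gt hp'pos
  have hkey : p' + p = p * p' := by
    field_simp at hpp'
    linarith
  have hprod : (p - 1) * (p' - 1) = 1 := by nlinarith
  have hp'1 : 0 < p' - 1 := by nlinarith
  -- basic objects
  obtain ⟨hf0, hf1, hf2⟩ := f_spec hfdef
  have hMf : Memlp p f := Memlp_f hp hfdef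
  set J : ℕ → ℂ := fun k => f k - fhat k with hJdef
  have hJm : Memlp p J := Memlp.sub' hp hMf hfhatmem
  have hfhat0 : fhat 0 = 0 := span_coeff0 hp hfdef hfhatmem hfhatSpan
  have hJ0 : J 0 = 1 := by rw [hJdef]; simp [hf0, hfhat0]
  -- evaluation at r
  have hfr : ∑' m, f m * r ^ m = 0 := by
    have hsupp : ∀ m ∉ ({0, 1} : Finset ℕ), f m * r ^ m = 0 := by
      intro m hm
      simp only [Finset.mem_insert, Finset.mem_singleton] at hm
      push_neg at hm
      rw [hf2 m (by omega), zero_mul]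
    rw [tsum_eq_sum hsupp, Finset.sum_pair (by omega : (0:ℕ) ≠ 1)]
    rw [hf0, hf1]
    field_simp; norm_num
  have hfhatr : ∑' m, fhat m * r ^ m = 0 :=
    span_eval hp hr0 hr1 hfdef hfhatmem hfhatSpan
  have hfsum : Summable fun m => f m * r ^ m := summable_coeff_mul_pow hp hMf hr1
  have hfhatsum : Summable fun m => fhat m * r ^ m := summable_coeff_mul_pow hp hfhatmem hr1
  have concl4 : ∑' k, J k * r ^ k = 0 := by
    have h1 : ∀ k, J k * r ^ k = f k * r ^ k - fhat k * r ^ k := by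
      intro k; rw [hJdef]; ring
    simp only [h1]
    rw [Summable.tsum_sub hfsum hfhatsum, hfr, hfhatr, sub_zero]
  -- orthogonality against shifts of f
  have hMshf : ∀ n : ℕ, Memlp p (shiftn n f) := fun n => (Memlp.shiftn_iff hp n f).mpr hMf
  have horthf : ∀ n : ℕ, 1 ≤ n → orth p J (shiftn n f) := by
    intro n hn β
    set g : ℕ → ℂ := fun m => fhat m - β * shiftn n f m with hg
    have hgm : Memlp p g :=
      Memlp.sub' hp hfhatmem (Memlp.const_mul hp (hMshf n) β)
    have hgspan : inSpanSf p f g :=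
      span_sub_smul hp hfdef hfhatmem (hMshf n) hfhatSpan (span_shiftf hp hn) β
    have := hfhatMin g hgm hgspan
    have heq : (fun k => f k - g k) = (fun k => J k + β * shiftn n f k) := by
      funext k; simp only [hg, hJdef]; ring
    rw [heq] at this
    exact this
  -- coefficient recursion
  set w : ℂ := zbr (p' - 1) r with hw
  have hzbrzbr : ∀ z : ℂ, zbr (p' - 1) (zbr (p - 1) z) = z := by
    intro z
    have h := zbr_zbr (s := p - 1) (t := p' - 1) hprod z
    exact h
  have hzbr_eq : ∀ z : ℂ, zbr (p-1) z = (‖z‖ ^ (p - 2) : ℝ) • (starRingEnd ℂ z) := by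
    intro z; unfold zbr; rw [show p - 1 - 1 = p - 2 from by ring]
  have hrec : ∀ n : ℕ, 1 ≤ n → J (n+1) = w * J n := by
    intro n hn
    have hb : ∀ k, k ≠ n → k ≠ n + 1 → shiftn n f k = 0 := by
      intro k h1 h2
      simp only [shiftn]
      by_cases h : k < n
      · rw [if_pos h]
      · rw [if_neg h]; exact hf2 _ (by omega)
    have htp := orth_two_point hp hJm n hb (horthf n hn)
    have e1 : shiftn n f n = 1 := by
      simp only [shiftn]; rw [if_neg (by omega), Nat.sub_self]; exact hf0
    have e2 : shiftn n f (n+1) = -r⁻¹ := by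
      simp only [shiftn]; rw [if_neg (by omega)]
      have h12 : n + 1 - n = 1 := by omega
      rw [h12]; exact hf1
    rw [e1, e2] at htp
    have hmin := min_two_point hp (J n) (J (n+1)) 1 (-r⁻¹) htp
    have hgoal : zbr (p-1) (J (n+1)) = r * zbr (p-1) (J n) := by
      simp only [hzbr_eq, Complex.real_smul] at hmin ⊢
      field_simp at hmin
      linear_combination -hmin
    calc J (n+1) = zbr (p'-1) (zbr (p-1) (J (n+1))) := (hzbrzbr _).symm
      _ = zbr (p'-1) (r * zbr (p-1) (J n)) := by rw [hgoal]
      _ = zbr (p'-1) r * zbr (p'-1) (zbr (p-1) (J n)) := zbr_mul _ _ _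
      _ = w * J n := by rw [hzbrzbr]
  have hwlt : ‖w‖ < 1 := by
    rw [hw, norm_zbr _ _ hr0]
    exact Real.rpow_lt_one (norm_nonneg r) hr1 hp'1
  have hJpow : ∀ k : ℕ, J (k+1) = w^k * J 1 := by
    intro k
    induction k with
    | zero => simp
    | succ k ih =>
      rw [hrec (k+1) (by omega), ih]
      ring
  have hS : ∀ z : ℂ, ‖z‖ < 1 → ∑' k, J k * z ^ k = 1 + J 1 * z * (1 - w*z)⁻¹ := by
    intro z hz
    have hwz : ‖w * z‖ < 1 := by
      rw [norm_mul]
      nlinarith [norm_nonneg w, norm_nonneg z]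
    have hsum : Summable fun k => J k * z ^ k := summable_coeff_mul_pow hp hJm hz
    rw [Summable.tsum_eq_zero_add hsum]
    congr 1
    · rw [hJ0, pow_zero, mul_one]
    · have h1 : ∀ k, J (k+1) * z ^ (k+1) = (J 1 * z) * (w*z)^k := by
        intro k
        rw [hJpow k, mul_pow]
        ring
      simp only [h1]
      rw [tsum_mul_left, tsum_geometric_of_norm_lt_one hwz]
  have hwr : ‖w * r‖ < 1 := by
    rw [norm_mul]; nlinarith [norm_nonneg w, norm_nonneg r]
  have h1wr : (1:ℂ) - w * r ≠ 0 := by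
    intro h
    have hwr1 : w * r = 1 := by linear_combination -h
    rw [hwr1] at hwr
    simp at hwr
  have hJ1 : J 1 * r = -(1 - w * r) := by
    have h0 := concl4
    rw [hS r hr1] at h0
    have h1rw : (1:ℂ) - r * w ≠ 0 := by rwa [mul_comm r w]
    field_simp at h0
    linear_combination h0
  refine ⟨?_, ⟨?_, ?_⟩, ?_, concl4⟩
  · intro z hz
    have hwzlt : ‖w * z‖ < 1 := by
      rw [norm_mul]; nlinarith [norm_nonneg w, norm_nonneg z]
    have hwz1 : (1:ℂ) - w*z ≠ 0 := by
      intro h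
      have hwz2 : w * z = 1 := by linear_combination -h
      rw [hwz2] at hwzlt; simp at hwzlt
    rw [show (∑' k, (f k - fhat k) * z^k) = ∑' k, J k * z^k from rfl, hS z hz]
    have hJ1' : (f 1 - fhat 1) * r = -(1 - w * r) := hJ1
    have hzw1 : (1:ℂ) - z * w ≠ 0 := by rwa [mul_comm z w]
    field_simp
    linear_combination z * hJ1'
  · intro h
    have h0 := congrFun h 0
    simp only [Pi.zero_apply] at h0
    rw [hJ0] at h0
    exact one_ne_zero h0
  · intro n hn β
    have hMshJ : Memlp p (shiftn n J) := (Memlp.shiftn_iff hp n J).mpr hJm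
    have hspanshJ : inSpanSf p f (shiftn n J) := by
      have h1 := span_sub_smul hp hfdef (hMshf n) ((Memlp.shiftn_iff hp n fhat).mpr hfhatmem)
        (span_shiftf hp hn) (span_shift hp hfhatSpan n) 1
      have h2 : (fun m => shiftn n f m - 1 * shiftn n fhat m) = shiftn n J := by
        funext m
        rw [one_mul, hJdef, shiftn_sub]
      rwa [h2] at h1
    set g : ℕ → ℂ := fun m => fhat m - β * shiftn n J m with hg
    have hgm : Memlp p g := Memlp.sub' hp hfhatmem (Memlp.const_mul hp hMshJ β)
    have hgspan : inSpanSf p f g := span_sub_smul hp hfdef hfhatmem hMshJ hfhatSpan hspanshJ β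
    have hmin2 := hfhatMin g hgm hgspan
    have heq : (fun k => f k - g k) = fun k => J k + β * shiftn n J k := by
      funext k; simp only [hg, hJdef]; ring
    rw [heq] at hmin2
    exact hmin2
  · rw [hf0, hfhat0]; norm_num
end

section
/- For p ∈ (1,∞) with conjugate p' and w ∈ D \ {0}, the function B_{w,p}(z) := (1 − z/w)/(1 − w^{⟨p'−1⟩} z) satisfies ‖B_{w,p}‖_p^p = 1 + (1 − |w|^{p'})^{p−1}/|w|^p, where the norm is the ℓ^p norm of the Taylor coefficients. -/
theorem B_norm_p (p p' : ℝ) (hp : 1 < p) (hpp' : 1/p + 1/p' = 1)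
    (w : ℂ) (hw0 : w ≠ 0) (hw1 : ‖w‖ < 1)
    (b : ℕ → ℂ)
    (hb : b = fun j => if j = 0 then 1
      else (zbr (p' - 1) w) ^ (j - 1) * (zbr (p' - 1) w - w⁻¹)) :
    (∀ z : ℂ, ‖z‖ < 1 →
      ∑' j, b j * z ^ j = (1 - z / w) / (1 - zbr (p' - 1) w * z)) ∧
    ∑' j, ‖b j‖ ^ p = 1 + (1 - ‖w‖ ^ p') ^ (p - 1) / ‖w‖ ^ p := by
  have hp0 : (0:ℝ) < p := lt_trans one_pos hp
  have hp'ne : p' ≠ 0 := by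
    intro h
    rw [h, div_zero, add_zero] at hpp'
    have : p = 1 := by field_simp at hpp'; linarith
    linarith
  have hkey : p + p' = p * p' := by field_simp at hpp'; linarith
  have hfac : (p - 1) * (p' - 1) = 1 := by linear_combination -hkey
  have hp'1 : 1 < p' := by nlinarith
  have hexp : (p' - 1) * p = p' := by linear_combination -hkey
  set v : ℂ := zbr (p' - 1) w with hv
  set nw : ℝ := ‖w‖ with hnw
  have hnw0 : 0 < nw := norm_pos_iff.mpr hw0
  have hb0 : b 0 = 1 := by simp [hb]
  have hbk : ∀ k : ℕ, b (k + 1) = v ^ k * (v - w⁻¹) := by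
    intro k; simp [hb, hv]
  have hvnorm : ‖v‖ = nw ^ (p' - 1) := by
    rw [hv, zbr, norm_smul, Real.norm_eq_abs,
      abs_of_nonneg (Real.rpow_nonneg hnw0.le _), RCLike.norm_conj, ← hnw,
      show p' - 1 - 1 = (p' - 1) + (-1) by ring, Real.rpow_add hnw0,
      Real.rpow_neg_one]
    field_simp
  have hvpos : 0 < ‖v‖ := by rw [hvnorm]; exact Real.rpow_pos_of_pos hnw0 _
  have hv0 : v ≠ 0 := norm_pos_iff.mp hvpos
  have hvlt : ‖v‖ < 1 := by
    rw [hvnorm]; exact Real.rpow_lt_one hnw0.le hw1 (by linarith)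
  have hX1 : nw ^ p' < 1 := Real.rpow_lt_one hnw0.le hw1 (by linarith)
  have hX0 : 0 < nw ^ p' := Real.rpow_pos_of_pos hnw0 _
  have hinv : w⁻¹ = (((nw ^ 2)⁻¹ : ℝ) : ℂ) * (starRingEnd ℂ w) := by
    rw [Complex.inv_def, Complex.normSq_eq_norm_sq]
    push_cast
    rw [hnw]
    ring
  have hsub2 : nw ^ (p' - 1 - 1) = nw ^ p' / nw ^ (2:ℕ) := by
    rw [show p' - 1 - 1 = p' - 2 by ring, Real.rpow_sub hnw0,
      show (2:ℝ) = ((2:ℕ):ℝ) by norm_num, Real.rpow_natCast]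
  have hVW : ‖v - w⁻¹‖ = (1 - nw ^ p') / nw := by
    have hfact : v - w⁻¹ = (((nw ^ (p' - 1 - 1) - (nw ^ 2)⁻¹ : ℝ)) : ℂ) * (starRingEnd ℂ w) := by
      rw [hv, zbr, hinv, Complex.real_smul]
      push_cast
      ring
    have h2 : (0:ℝ) < nw ^ (2:ℕ) := by positivity
    rw [hfact, norm_mul, Complex.norm_real, RCLike.norm_conj, Real.norm_eq_abs, hsub2]
    rw [abs_of_nonpos (by
      rw [sub_nonpos, inv_eq_one_div]
      gcongr)]
    rw [← hnw]
    field_simp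
    ring
  constructor
  · -- power series identity
    intro z hz
    have hvz : ‖v * z‖ < 1 := by
      rw [norm_mul]
      nlinarith [norm_nonneg z, norm_nonneg v]
    have hne : (1 : ℂ) - v * z ≠ 0 := by
      intro h
      have h1 : v * z = 1 := by linear_combination -h
      rw [h1] at hvz
      simp at hvz
    set c : ℂ := (v - w⁻¹) / v with hc
    have hfun : ∀ j : ℕ, b j * z ^ j = (if j = 0 then 1 - c else 0) + c * (v * z) ^ j := by
      intro j
      rcases j with _ | k
      · rw [hb0, pow_zero, mul_one, if_pos rfl, pow_zero, mul_one]
        ring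
      · rw [hbk, if_neg (Nat.succ_ne_zero k), zero_add, hc, mul_pow, pow_succ v k]
        field_simp
    have hs1 : Summable (fun j : ℕ => if j = 0 then (1 - c) else 0) :=
      (hasSum_ite_eq 0 (1 - c)).summable
    have hs2 : Summable (fun j : ℕ => c * (v * z) ^ j) :=
      (summable_geometric_of_norm_lt_one hvz).mul_left c
    calc ∑' j, b j * z ^ j
        = ∑' j, ((if j = 0 then 1 - c else 0) + c * (v * z) ^ j) := tsum_congr hfun
      _ = (1 - c) + c * (1 - v * z)⁻¹ := by
          rw [Summable.tsum_add hs1 hs2, tsum_ite_eq, tsum_mul_left,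
            tsum_geometric_of_norm_lt_one hvz]
      _ = (1 - z / w) / (1 - v * z) := by
          rw [hc]
          field_simp
          ring
  · -- the ℓ^p norm of the coefficients
    set r : ℝ := nw ^ p' with hr
    set A : ℝ := ‖v - w⁻¹‖ ^ p with hA
    have hr0 : 0 < r := hX0
    have hr1 : r < 1 := hX1
    have hAval : A = (1 - r) ^ p / nw ^ p := by
      rw [hA, hVW, Real.div_rpow (by linarith) hnw0.le]
    have hvp : ‖v‖ ^ p = r := by
      rw [hvnorm, ← Real.rpow_mul hnw0.le, hexp]
    have hfun2 : ∀ j : ℕ, ‖b j‖ ^ p = (if j = 0 then 1 - A / r else 0) + (A / r) * r ^ j := by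
      intro j
      rcases j with _ | k
      · rw [hb0, norm_one, Real.one_rpow, if_pos rfl, pow_zero, mul_one]
        ring
      · rw [hbk, if_neg (Nat.succ_ne_zero k), zero_add, norm_mul, norm_pow,
          Real.mul_rpow (by positivity) (norm_nonneg _)]
        have hk : (‖v‖ ^ k) ^ p = r ^ k := by
          rw [← Real.rpow_natCast ‖v‖ k, ← Real.rpow_mul (norm_nonneg v), mul_comm,
            Real.rpow_mul (norm_nonneg v), hvp, Real.rpow_natCast]
        rw [hk, ← hA, pow_succ]
        field_simp
    have hs1 : Summable (fun j : ℕ => if j = 0 then (1 - A / r) else 0) :=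
      (hasSum_ite_eq 0 (1 - A / r)).summable
    have hs2 : Summable (fun j : ℕ => (A / r) * r ^ j) :=
      (summable_geometric_of_lt_one hr0.le hr1).mul_left _
    calc ∑' j, ‖b j‖ ^ p
        = ∑' j, ((if j = 0 then 1 - A / r else 0) + (A / r) * r ^ j) := tsum_congr hfun2
      _ = (1 - A / r) + (A / r) * (1 - r)⁻¹ := by
          rw [Summable.tsum_add hs1 hs2, tsum_ite_eq, tsum_mul_left,
            tsum_geometric_of_lt_one hr0.le hr1]
      _ = 1 + (1 - r) ^ (p - 1) / nw ^ p := by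
          have h1r : (0:ℝ) < 1 - r := by linarith
          have hpow : (1 - r) ^ p = (1 - r) ^ (p - 1) * (1 - r) := by
            rw [← Real.rpow_add_one h1r.ne' (p - 1)]
            norm_num
          have hnwp : (0:ℝ) < nw ^ p := Real.rpow_pos_of_pos hnw0 _
          rw [hAval, hpow]
          field_simp
          ring
end

section
/- For p, t ∈ (1,∞), conjugate index p' of p, and w ∈ D \ {0}, the function B_{w,p}(z) := (1 − z/w)/(1 − w^{⟨p'−1⟩} z) satisfies ‖B_{w,p}‖_t^t = 1 + (1 − |w|^{p'})^t / (|w|^t (1 − |w|^{(p'−1)t})), where ‖·‖_t is the ℓ^t norm of Taylor coefficients. Moreover, for fixed p and t, ‖B_{w,p}‖_t^t → 1 as |w| → 1⁻. -/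
/-- The Taylor coefficients of `B_{w,p}(z) = (1 - z/w)/(1 - w^{⟨p'-1⟩} z)`. -/
noncomputable def Bcoef (p' : ℝ) (w : ℂ) : ℕ → ℂ := fun j =>
  if j = 0 then 1 else (zbr (p' - 1) w) ^ (j - 1) * (zbr (p' - 1) w - w⁻¹)

open Real Filter Set

lemma zbr_norm (s : ℝ) (w : ℂ) (hw : w ≠ 0) : ‖zbr s w‖ = ‖w‖ ^ s := by
  have hr : (0:ℝ) < ‖w‖ := norm_pos_iff.mpr hw
  rw [zbr, norm_smul, Real.norm_eq_abs, abs_of_nonneg (Real.rpow_nonneg hr.le _)]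
  rw [RCLike.norm_conj, ← Real.rpow_add_one hr.ne']
  ring_nf

lemma zbr_sub_inv_norm (p' : ℝ) (hp' : 1 < p') (w : ℂ) (hw : w ≠ 0) (hw1 : ‖w‖ < 1) :
    ‖zbr (p' - 1) w - w⁻¹‖ = (1 - ‖w‖ ^ p') / ‖w‖ := by
  have hr : (0:ℝ) < ‖w‖ := norm_pos_iff.mpr hw
  have hkey : zbr (p' - 1) w - w⁻¹
      = ((‖w‖ ^ (p' - 1 - 1) - (‖w‖ ^ 2)⁻¹ : ℝ)) • (starRingEnd ℂ w) := by
    rw [zbr, sub_smul]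
    congr 1
    rw [Complex.inv_def, Complex.normSq_eq_norm_sq]
    push_cast
    rw [Complex.real_smul]
    push_cast
    ring
  rw [hkey, norm_smul, Real.norm_eq_abs, RCLike.norm_conj]
  have h1 : ‖w‖ ^ (p' - 1 - 1) = ‖w‖ ^ p' / ‖w‖ ^ 2 := by
    rw [show p' - 1 - 1 = p' - 2 by ring, Real.rpow_sub hr, Real.rpow_two]
  have h2 : ‖w‖ ^ p' < 1 := Real.rpow_lt_one hr.le hw1 (by linarith)
  have h3 : ‖w‖ ^ (p' - 1 - 1) - (‖w‖ ^ 2)⁻¹ ≤ 0 := by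
    rw [h1]
    have h4 : (0:ℝ) < ‖w‖ ^ 2 := by positivity
    rw [div_eq_mul_inv]
    nlinarith [inv_pos.mpr h4]
  rw [abs_of_nonpos h3, h1]
  set r := ‖w‖ with hrdef
  have ha : r ≠ 0 := hr.ne'
  field_simp
  ring

lemma norm_Bcoef_rpow (p' t : ℝ) (hp' : 1 < p') (w : ℂ) (hw : w ≠ 0) (hw1 : ‖w‖ < 1)
    (j : ℕ) :
    ‖Bcoef p' w (j + 1)‖ ^ t
      = ((‖w‖ ^ (p' - 1)) ^ t) ^ j * (((1 - ‖w‖ ^ p') / ‖w‖) ^ t) := by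
  have hr : (0:ℝ) < ‖w‖ := norm_pos_iff.mpr hw
  have hρ : (0:ℝ) ≤ ‖w‖ ^ (p' - 1) := Real.rpow_nonneg hr.le _
  have h2 : ‖w‖ ^ p' < 1 := Real.rpow_lt_one hr.le hw1 (by linarith)
  have hc : (0:ℝ) ≤ (1 - ‖w‖ ^ p') / ‖w‖ := div_nonneg (by linarith) hr.le
  have : ‖Bcoef p' w (j + 1)‖ = (‖w‖ ^ (p' - 1)) ^ j * ((1 - ‖w‖ ^ p') / ‖w‖) := by
    simp only [Bcoef, Nat.add_eq_zero, Nat.succ_ne_zero, and_false, if_false,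
      Nat.add_sub_cancel, norm_mul, norm_pow]
    rw [zbr_norm _ _ hw, zbr_sub_inv_norm p' hp' w hw hw1]
  rw [this, Real.mul_rpow (pow_nonneg hρ _) hc]
  congr 1
  rw [← Real.rpow_natCast (‖w‖ ^ (p' - 1)) j, ← Real.rpow_mul hρ,
    mul_comm (j:ℝ) t, Real.rpow_mul hρ, Real.rpow_natCast]

lemma B_sum (p' t : ℝ) (hp' : 1 < p') (ht : 1 < t) (w : ℂ) (hw : w ≠ 0) (hw1 : ‖w‖ < 1) :
    ∑' j, ‖Bcoef p' w j‖ ^ t =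
      1 + (1 - ‖w‖ ^ p') ^ t / (‖w‖ ^ t * (1 - ‖w‖ ^ ((p' - 1) * t))) := by
  have hr : (0:ℝ) < ‖w‖ := norm_pos_iff.mpr hw
  set ρ := (‖w‖ ^ (p' - 1)) ^ t with hρdef
  have hρ0 : (0:ℝ) ≤ ρ := Real.rpow_nonneg (Real.rpow_nonneg hr.le _) _
  have hρ1 : ρ < 1 :=
    Real.rpow_lt_one (Real.rpow_nonneg hr.le _)
      (Real.rpow_lt_one hr.le hw1 (by linarith)) (by linarith)
  set c := ((1 - ‖w‖ ^ p') / ‖w‖) ^ t with hcdef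
  have hsum1 : Summable (fun j : ℕ => ‖Bcoef p' w (j + 1)‖ ^ t) := by
    have : Summable (fun j : ℕ => ρ ^ j * c) :=
      (summable_geometric_of_lt_one hρ0 hρ1).mul_right c
    exact this.congr fun j => (norm_Bcoef_rpow p' t hp' w hw hw1 j).symm
  have hsum : Summable (fun j : ℕ => ‖Bcoef p' w j‖ ^ t) :=
    (summable_nat_add_iff 1).mp hsum1
  rw [Summable.tsum_eq_zero_add hsum]
  have h0 : ‖Bcoef p' w 0‖ ^ t = 1 := by simp [Bcoef]
  rw [h0]
  congr 1
  calc ∑' j : ℕ, ‖Bcoef p' w (j + 1)‖ ^ t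
      = ∑' j : ℕ, ρ ^ j * c := tsum_congr (norm_Bcoef_rpow p' t hp' w hw hw1)
    _ = (1 - ρ)⁻¹ * c := by rw [tsum_mul_right, tsum_geometric_of_lt_one hρ0 hρ1]
    _ = c / (1 - ρ) := by rw [inv_mul_eq_div]
    _ = (1 - ‖w‖ ^ p') ^ t / (‖w‖ ^ t * (1 - ‖w‖ ^ ((p' - 1) * t))) := by
        rw [hcdef, Real.div_rpow (by
            have h2 : ‖w‖ ^ p' < 1 := Real.rpow_lt_one hr.le hw1 (by linarith)
            linarith) hr.le, hρdef, ← Real.rpow_mul hr.le, div_div]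

lemma G_tendsto (p' t : ℝ) (hp' : 1 < p') (ht : 1 < t) :
    Tendsto (fun r : ℝ => 1 + (1 - r ^ p') ^ t / (r ^ t * (1 - r ^ ((p' - 1) * t))))
      (nhdsWithin 1 (Set.Iio 1)) (nhds 1) := by
  set q := (p' - 1) * t with hq
  have hq0 : 0 < q := by
    have := mul_pos (by linarith : (0:ℝ) < p' - 1) (by linarith : (0:ℝ) < t)
    simpa [hq] using this
  have hmem : Set.Ioo (0:ℝ) 1 ∈ nhdsWithin (1:ℝ) (Set.Iio 1) :=
    Ioo_mem_nhdsLT_of_mem (by constructor <;> norm_num)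
  -- slope limits
  have hle : nhdsWithin (1:ℝ) (Set.Iio 1) ≤ nhdsWithin (1:ℝ) {(1:ℝ)}ᶜ :=
    nhdsWithin_mono _ (fun x hx => ne_of_lt hx)
  have hslope1 : Tendsto (slope (fun x : ℝ => x ^ p') 1)
      (nhdsWithin (1:ℝ) (Set.Iio 1)) (nhds p') := by
    have h := (hasDerivAt_iff_tendsto_slope.mp
      (Real.hasDerivAt_rpow_const (x := 1) (p := p') (Or.inl one_ne_zero)))
    simpa using h.mono_left hle
  have hslope2 : Tendsto (slope (fun x : ℝ => x ^ q) 1)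
      (nhdsWithin (1:ℝ) (Set.Iio 1)) (nhds q) := by
    have h := (hasDerivAt_iff_tendsto_slope.mp
      (Real.hasDerivAt_rpow_const (x := 1) (p := q) (Or.inl one_ne_zero)))
    simpa using h.mono_left hle
  have hR : Tendsto (fun r : ℝ => (1 - r ^ p') / (1 - r ^ q))
      (nhdsWithin 1 (Set.Iio 1)) (nhds (p' / q)) := by
    have h := hslope1.div hslope2 hq0.ne'
    refine Tendsto.congr' ?_ h
    filter_upwards [hmem] with r hr
    have hrq : r ^ q < 1 := Real.rpow_lt_one hr.1.le hr.2 hq0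
    have h1 : r - 1 ≠ 0 := sub_ne_zero.mpr hr.2.ne
    have h2 : r ^ q - 1 ≠ 0 := sub_ne_zero.mpr hrq.ne
    have h3 : (1:ℝ) - r ^ q ≠ 0 := sub_ne_zero.mpr hrq.ne'
    simp only [Pi.div_apply, slope_def_field, Real.one_rpow]
    field_simp
    ring
  -- main tendsto for the fraction
  have hfrac : Tendsto (fun r : ℝ => (1 - r ^ p') ^ t / (r ^ t * (1 - r ^ q)))
      (nhdsWithin 1 (Set.Iio 1)) (nhds 0) := by
    have hT1 : Tendsto (fun r : ℝ => ((1 - r ^ p') / (1 - r ^ q)) ^ t)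
        (nhdsWithin 1 (Set.Iio 1)) (nhds ((p' / q) ^ t)) :=
      hR.rpow_const (Or.inr (by linarith))
    have hbase : Tendsto (fun r : ℝ => 1 - r ^ q) (nhdsWithin 1 (Set.Iio 1)) (nhds 0) := by
      have hc : Tendsto (fun r : ℝ => r ^ q) (nhds (1:ℝ)) (nhds ((1:ℝ) ^ q)) :=
        (Real.continuousAt_rpow_const 1 q (Or.inl one_ne_zero))
      have : Tendsto (fun r : ℝ => 1 - r ^ q) (nhds (1:ℝ)) (nhds (1 - (1:ℝ) ^ q)) :=
        tendsto_const_nhds.sub hc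
      simpa using this.mono_left nhdsWithin_le_nhds
    have hT2 : Tendsto (fun r : ℝ => (1 - r ^ q) ^ (t - 1))
        (nhdsWithin 1 (Set.Iio 1)) (nhds 0) := by
      have := hbase.rpow_const (p := t - 1) (Or.inr (by linarith))
      simpa [Real.zero_rpow (by linarith : t - 1 ≠ 0)] using this
    have hT3 : Tendsto (fun r : ℝ => r ^ t) (nhdsWithin 1 (Set.Iio 1)) (nhds 1) := by
      have hc : Tendsto (fun r : ℝ => r ^ t) (nhds (1:ℝ)) (nhds ((1:ℝ) ^ t)) :=
        (Real.continuousAt_rpow_const 1 t (Or.inl one_ne_zero))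
      simpa using hc.mono_left nhdsWithin_le_nhds
    have h := (hT1.mul hT2).div hT3 one_ne_zero
    rw [mul_zero, zero_div] at h
    refine Tendsto.congr' ?_ h
    filter_upwards [hmem] with r hr
    have hrp : r ^ p' < 1 := Real.rpow_lt_one hr.1.le hr.2 (by linarith)
    have hrq : r ^ q < 1 := Real.rpow_lt_one hr.1.le hr.2 hq0
    have h1q : (0:ℝ) < 1 - r ^ q := by linarith
    simp only [Pi.div_apply]
    rw [Real.div_rpow (by linarith) h1q.le, Real.rpow_sub h1q]
    have hB : (1 - r ^ q) ^ t ≠ 0 := (Real.rpow_pos_of_pos h1q t).ne'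
    have hr0 : r ^ t ≠ 0 := (Real.rpow_pos_of_pos hr.1 t).ne'
    field_simp
    rw [Real.rpow_one]
  have := hfrac.const_add (1:ℝ)
  simpa using this

theorem B_norm_t_and_limit (p p' t : ℝ) (hp : 1 < p) (hpp' : 1/p + 1/p' = 1)
    (ht : 1 < t) :
    (∀ w : ℂ, w ≠ 0 → ‖w‖ < 1 →
      ∑' j, ‖Bcoef p' w j‖ ^ t =
        1 + (1 - ‖w‖ ^ p') ^ t / (‖w‖ ^ t * (1 - ‖w‖ ^ ((p' - 1) * t)))) ∧
    Filter.Tendsto (fun w : ℂ => ∑' j, ‖Bcoef p' w j‖ ^ t)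
      (Filter.comap (fun w : ℂ => ‖w‖) (nhdsWithin 1 (Set.Iio 1)))
      (nhds 1) := by
  have hp0 : (0:ℝ) < p := by linarith
  have hip : 1/p < 1 := by rw [div_lt_one hp0]; exact hp
  have hip' : 0 < 1/p' := by linarith
  have hp'0 : 0 < p' := by
    by_contra h
    push_neg at h
    have : 1/p' ≤ 0 := div_nonpos_of_nonneg_of_nonpos zero_le_one h
    linarith
  have hp' : 1 < p' := by
    have h1 : 1/p' < 1 := by
      have h0 : 0 < 1/p := by positivity
      linarith
    rw [div_lt_one hp'0] at h1
    exact h1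
  constructor
  · exact fun w hw hw1 => B_sum p' t hp' ht w hw hw1
  · have hG := G_tendsto p' t hp' ht
    have hcomp : Tendsto (fun w : ℂ =>
        1 + (1 - ‖w‖ ^ p') ^ t / (‖w‖ ^ t * (1 - ‖w‖ ^ ((p' - 1) * t))))
        (Filter.comap (fun w : ℂ => ‖w‖) (nhdsWithin 1 (Set.Iio 1))) (nhds 1) :=
      hG.comp tendsto_comap
    refine Tendsto.congr' ?_ hcomp
    have hmem : Set.Ioo (0:ℝ) 1 ∈ nhdsWithin (1:ℝ) (Set.Iio 1) :=
      Ioo_mem_nhdsLT_of_mem (by constructor <;> norm_num)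
    have hpre : (fun w : ℂ => ‖w‖) ⁻¹' Set.Ioo (0:ℝ) 1 ∈
        Filter.comap (fun w : ℂ => ‖w‖) (nhdsWithin 1 (Set.Iio 1)) :=
      Filter.preimage_mem_comap hmem
    filter_upwards [hpre] with w hw
    exact (B_sum p' t hp' ht w (norm_pos_iff.mp hw.1) hw.2).symm
end
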